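/- Let T > 0, let G ∈ L¹(ℝ) be even, and let m : [0,T) × ℝ → ℝ be such that for each t ∈ [0,T) the function m(t,·) is Schwartz, m is differentiable in t, and m satisfies ∂ₜm(t,x) + u(t,x) ∂ₓm(t,x) + 2 ∂ₓu(t,x) m(t,x) = 0 where u(t,·) = G * m(t,·). Assume moreover the differentiation-under-the-integral hypothesis: the function I(t) = ∫_ℝ m(t,x) dx is differentiable with I′(t) = ∫_ℝ ∂ₜm(t,x) dx. Then I(t) = I(0) for all t ∈ [0,T); in particular, if additionally m(t,x) ≥ 0 for all (t,x), then the L¹ norm ‖m(t,·)‖_{L¹} is constant in t. -/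

import Mathlib

/-!
Integrating the equation in `x` gives `I' = -∫ (u mₓ + 2 uₓ m)` with `u = G * m`. Integration by
parts gives `∫ u mₓ = -∫ uₓ m`, while for even `G` convolution with `G` is symmetric for the
`L²` pairing, so `∫ uₓ m = ∫ (G * mₓ) m = ∫ mₓ (G * m) = ∫ u mₓ`. Both integrals therefore vanish,
`I' = 0` on `[0, T)`, and `I` is constant.
-/

open MeasureTheory Set

theorem integral_mul_deriv_eq_neg_integral_deriv_mul {u v : ℝ → ℝ} {C C' : ℝ}
    (hu : Differentiable ℝ u) (huC : ∀ x, ‖u x‖ ≤ C) (hu'C : ∀ x, ‖deriv u x‖ ≤ C')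
    (hv : Differentiable ℝ v) (hvi : Integrable v) (hv'i : Integrable (deriv v)) :
    ∫ x, u x * deriv v x = -∫ x, deriv u x * v x :=
  integral_mul_deriv_eq_deriv_mul_of_integrable (fun x _ => (hu x).hasDerivAt)
    (fun x _ => (hv x).hasDerivAt)
    (hv'i.bdd_mul hu.continuous.aestronglyMeasurable (ae_of_all _ huC))
    (hvi.bdd_mul (measurable_deriv u).aestronglyMeasurable (ae_of_all _ hu'C))
    (hvi.bdd_mul hu.continuous.aestronglyMeasurable (ae_of_all _ huC))

theorem eq_of_hasDerivAt_eq_zero_of_mem_Ico {E : Type*} [NormedAddCommGroup E] [NormedSpace ℝ E]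
    {f : ℝ → E} {a b t : ℝ} (hf : ∀ s ∈ Ico a b, HasDerivAt f 0 s) (ht : t ∈ Ico a b) :
    f t = f a := by
  have hsub : Icc a t ⊆ Ico a b := Icc_subset_Ico_right ht.2
  exact constant_of_has_deriv_right_zero
    (fun s hs => (hf s (hsub hs)).continuousAt.continuousWithinAt)
    (fun s hs => (hf s (hsub (Ico_subset_Icc_self hs))).hasDerivWithinAt) t (right_mem_Icc.2 ht.1)

section KernelConvolution

variable {G g : ℝ → ℝ} {C : ℝ}

theorem integral_comp_sub_mul_eq (G g : ℝ → ℝ) (x : ℝ) :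
    ∫ y, G (x - y) * g y = ∫ y, G y * g (x - y) := by
  rw [← integral_sub_left_eq_self (fun y => G y * g (x - y)) volume x]
  simp

theorem integrable_mul_comp_sub (hG : Integrable G) (hg : Continuous g) (hgC : ∀ x, ‖g x‖ ≤ C)
    (x : ℝ) : Integrable (fun y => G y * g (x - y)) :=
  hG.mul_bdd (hg.comp (continuous_sub_left x)).aestronglyMeasurable
    (ae_of_all _ fun y => hgC (x - y))

theorem norm_integral_comp_sub_mul_le (hG : Integrable G) (hgC : ∀ x, ‖g x‖ ≤ C) (x : ℝ) :
    ‖∫ y, G (x - y) * g y‖ ≤ (∫ y, ‖G y‖) * C := by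
  rw [integral_comp_sub_mul_eq, ← integral_mul_const]
  refine norm_integral_le_of_norm_le (hG.norm.mul_const C) (ae_of_all _ fun y => ?_)
  rw [norm_mul]
  exact mul_le_mul_of_nonneg_left (hgC (x - y)) (norm_nonneg _)

theorem hasDerivAt_integral_comp_sub_mul (hG : Integrable G) (hg : Differentiable ℝ g)
    (hgC : ∀ x, ‖g x‖ ≤ C) {C' : ℝ} (hg'C : ∀ x, ‖deriv g x‖ ≤ C') (x : ℝ) :
    HasDerivAt (fun z => ∫ y, G (z - y) * g y) (∫ y, G (x - y) * deriv g y) x := by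
  simp_rw [integral_comp_sub_mul_eq G]
  refine (hasDerivAt_integral_of_dominated_loc_of_deriv_le
    (F' := fun z y => G y * deriv g (z - y)) (bound := fun y => ‖G y‖ * C')
    (Metric.ball_mem_nhds x one_pos)
    (Filter.Eventually.of_forall fun z => (integrable_mul_comp_sub hG hg.continuous hgC z).1)
    (integrable_mul_comp_sub hG hg.continuous hgC x)
    (hG.1.mul ((measurable_deriv g).comp (measurable_const.sub measurable_id)).aestronglyMeasurable)
    (ae_of_all _ fun y z _ => ?_) (hG.norm.mul_const C') (ae_of_all _ fun y z _ => ?_)).2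
  · rw [norm_mul]
    exact mul_le_mul_of_nonneg_left (hg'C (z - y)) (norm_nonneg _)
  · exact ((hg (z - y)).hasDerivAt.comp z ((hasDerivAt_id z).sub_const y)).const_mul (G y)
      |>.congr_deriv (by simp)

theorem integral_integral_comp_sub_mul_mul_comm (hG : Integrable G) (hGeven : Function.Even G)
    {h : ℝ → ℝ} (hg : AEStronglyMeasurable g) (hgC : ∀ x, ‖g x‖ ≤ C) (hh : Integrable h) :
    ∫ x, (∫ y, G (x - y) * g y) * h x = ∫ x, g x * ∫ y, G (x - y) * h y := by
  have hGh : Integrable (fun p : ℝ × ℝ => G (p.2 - p.1) * h p.1) (volume.prod volume) :=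
    (measurePreserving_prod_sub volume volume).integrable_comp_emb
      (MeasurableEquiv.shearSubRight ℝ).measurableEmbedding |>.2 (hh.mul_prod hG) |>.congr
      (ae_of_all _ fun p => mul_comm _ _)
  have hF : Integrable (fun p : ℝ × ℝ => G (p.1 - p.2) * g p.2 * h p.1) (volume.prod volume) := by
    refine (hGh.bdd_mul hg.comp_snd (ae_of_all _ fun p => hgC p.2)).congr (ae_of_all _ fun p => ?_)
    dsimp only
    rw [← hGeven, neg_sub]; ring
  calc ∫ x, (∫ y, G (x - y) * g y) * h x = ∫ x, ∫ y, G (x - y) * g y * h x := by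
        simp_rw [integral_mul_const]
    _ = ∫ y, ∫ x, G (x - y) * g y * h x := integral_integral_swap hF
    _ = ∫ y, g y * ∫ x, G (y - x) * h x := by
        simp_rw [← integral_const_mul]
        congr 1; ext y; congr 1; ext x
        rw [← hGeven, neg_sub]; ring

theorem integral_conv_mul_deriv_add_two_mul_deriv_conv_mul_eq_zero (hG : Integrable G)
    (hGeven : Function.Even G) (f : SchwartzMap ℝ ℝ) :
    ∫ x, ((∫ y, G (x - y) * f y) * deriv (fun z => (f z : ℝ)) x
      + 2 * deriv (fun z => ∫ y, G (z - y) * f y) x * f x) = 0 := by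
  set u := fun z => ∫ y, G (z - y) * f y
  set f' := SchwartzMap.derivCLM ℝ ℝ f
  have hf' : deriv (fun z => (f z : ℝ)) = f' :=
    funext fun x => (SchwartzMap.derivCLM_apply ℝ f x).symm
  have hf_le := SchwartzMap.norm_le_seminorm ℝ f
  have hf'_le := SchwartzMap.norm_le_seminorm ℝ f'
  have hu : ∀ x, HasDerivAt u (∫ y, G (x - y) * f' y) x := by
    simpa [hf'] using hasDerivAt_integral_comp_sub_mul hG f.differentiable hf_le (hf' ▸ hf'_le)
  have hu_diff : Differentiable ℝ u := fun x => (hu x).differentiableAt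
  have hu' : deriv u = fun x => ∫ y, G (x - y) * f' y := funext fun x => (hu x).deriv
  have huC := norm_integral_comp_sub_mul_le hG hf_le
  have hu'C : ∀ x, ‖deriv u x‖ ≤ (∫ y, ‖G y‖) * SchwartzMap.seminorm ℝ 0 0 f' :=
    fun x => (hu x).deriv ▸ norm_integral_comp_sub_mul_le hG hf'_le x
  have hparts : ∫ x, u x * f' x = -∫ x, deriv u x * f x := by
    simpa [hf'] using integral_mul_deriv_eq_neg_integral_deriv_mul hu_diff huC hu'C
      f.differentiable f.integrable (hf' ▸ f'.integrable)
  have hsymm : ∫ x, deriv u x * f x = ∫ x, u x * f' x := by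
    rw [hu', integral_integral_comp_sub_mul_mul_comm hG hGeven f'.continuous.aestronglyMeasurable
      hf'_le f.integrable]
    simp_rw [mul_comm (f' _)]
    rfl
  have hi₁ : Integrable fun x => u x * f' x :=
    f'.integrable.bdd_mul hu_diff.continuous.aestronglyMeasurable (ae_of_all _ huC)
  have hi₂ : Integrable fun x => deriv u x * f x :=
    f.integrable.bdd_mul (measurable_deriv u).aestronglyMeasurable (ae_of_all _ hu'C)
  simp_rw [hf', mul_assoc (2 : ℝ)]
  rw [integral_add hi₁ (hi₂.const_mul 2), integral_const_mul]
  linarith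

end KernelConvolution

theorem integral_momentum_conserved_general (T : ℝ) (hT : 0 < T)
    (G : ℝ → ℝ) (hG : Integrable G) (hGeven : ∀ x : ℝ, G (-x) = G x)
    (m : ℝ → SchwartzMap ℝ ℝ) (mt : ℝ → ℝ → ℝ)
    (heq : ∀ t ∈ Set.Ico (0 : ℝ) T, ∀ x : ℝ,
      mt t x + (∫ y : ℝ, G (x - y) * m t y) * deriv (fun z => (m t z : ℝ)) x
        + 2 * deriv (fun z => ∫ y : ℝ, G (z - y) * m t y) x * m t x = 0)
    (hI : ∀ t ∈ Set.Ico (0 : ℝ) T,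
      HasDerivAt (fun s => ∫ x : ℝ, (m s x : ℝ)) (∫ x : ℝ, mt t x) t) :
    (∀ t ∈ Set.Ico (0 : ℝ) T, ∫ x : ℝ, (m t x : ℝ) = ∫ x : ℝ, (m 0 x : ℝ)) ∧
    ((∀ t ∈ Set.Ico (0 : ℝ) T, ∀ x : ℝ, 0 ≤ m t x) →
      ∀ t ∈ Set.Ico (0 : ℝ) T, ∫ x : ℝ, |(m t x : ℝ)| = ∫ x : ℝ, |(m 0 x : ℝ)|) := by
  have hmt_zero : ∀ t ∈ Ico (0 : ℝ) T, ∫ x, mt t x = 0 := fun t ht => by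
    simp_rw [add_assoc] at heq
    rw [integral_congr_ae (ae_of_all _ fun x => eq_neg_of_add_eq_zero_left (heq t ht x)),
      integral_neg, integral_conv_mul_deriv_add_two_mul_deriv_conv_mul_eq_zero hG hGeven, neg_zero]
  have hconst : ∀ t ∈ Ico (0 : ℝ) T, ∫ x, (m t x : ℝ) = ∫ x, (m 0 x : ℝ) :=
    fun t => eq_of_hasDerivAt_eq_zero_of_mem_Ico fun s hs => hmt_zero s hs ▸ hI s hs
  refine ⟨hconst, fun hpos t ht => ?_⟩
  have habs : ∀ s ∈ Ico (0 : ℝ) T, ∫ x, |(m s x : ℝ)| = ∫ x, (m s x : ℝ) := fun s hs =>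
    integral_congr_ae (ae_of_all _ fun x => abs_of_nonneg (hpos s hs x))
  rw [habs t ht, habs 0 ⟨le_rfl, hT⟩, hconst t ht]

/-- Conservation of `∫ m dx` (and of the `L¹` norm for nonnegative `m`) for the
transport equation `∂ₜm + u ∂ₓm + 2 ∂ₓu m = 0` with `u = G * m` and an even
integrable kernel `G`, granted differentiation under the integral sign. -/
theorem integral_momentum_conserved (T : ℝ) (hT : 0 < T)
    (G : ℝ → ℝ) (hG : Integrable G) (hGeven : ∀ x : ℝ, G (-x) = G x)
    (m : ℝ → SchwartzMap ℝ ℝ) (mt : ℝ → ℝ → ℝ)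
    (hmt : ∀ t ∈ Set.Ico (0 : ℝ) T, ∀ x : ℝ,
      HasDerivAt (fun s => (m s x : ℝ)) (mt t x) t)
    (heq : ∀ t ∈ Set.Ico (0 : ℝ) T, ∀ x : ℝ,
      mt t x + (∫ y : ℝ, G (x - y) * m t y) * deriv (fun z => (m t z : ℝ)) x
        + 2 * deriv (fun z => ∫ y : ℝ, G (z - y) * m t y) x * m t x = 0)
    (hI : ∀ t ∈ Set.Ico (0 : ℝ) T,
      HasDerivAt (fun s => ∫ x : ℝ, (m s x : ℝ)) (∫ x : ℝ, mt t x) t) :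
    (∀ t ∈ Set.Ico (0 : ℝ) T, ∫ x : ℝ, (m t x : ℝ) = ∫ x : ℝ, (m 0 x : ℝ)) ∧
    ((∀ t ∈ Set.Ico (0 : ℝ) T, ∀ x : ℝ, 0 ≤ m t x) →
      ∀ t ∈ Set.Ico (0 : ℝ) T, ∫ x : ℝ, |(m t x : ℝ)| = ∫ x : ℝ, |(m 0 x : ℝ)|) :=
  integral_momentum_conserved_general T hT G hG hGeven m mt heq hI
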